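/- arXiv:2511.15326 — 3 statements merged into one kernel-verified Lean document; each statement's English description precedes it below -/
import Mathlib

section
/- Let F(x) = x - x^2 for x in [0,1], let m be a positive integer, and let I_m : [0,1] -> [0,1] be the piecewise linear interpolant of F at the points k/2^m, k in {0,...,2^m}, i.e., I_m(k/2^m) = F(k/2^m) for all k in {0,...,2^m} and I_m is affine on each interval [k/2^m,(k+1)/2^m] for k in {0,...,2^m-1}. Then sup_{x in [0,1]} |F(x) - I_m(x)| = 2^{-2m-2}. Moreover, defining s_l(y) = (1/2)*max(0,y) - max(0, y - 2^{-2l-1}) for l in N_0, and recursively H_0 = s_0, H_l = s_l ∘ H_{l-1} for l >= 1, it holds that I_m(x) = sum_{l=0}^{m-1} H_l(x) for all x in [0,1]. -/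
/-!
With the tent map `g(x) = 2x - 4·max(0, x - 1/2)` and `F(x) = x - x²` one has
`F = g/4 + (F ∘ g)/4`, and on `[0,1]` the network layers are rescaled iterates of `g`:
`H_ℓ = g^[ℓ+1] / 4^(ℓ+1)`. Telescoping gives `∑_{ℓ<m} H_ℓ = F - (F ∘ g^[m]) / 4^m`.
On a dyadic cell `[k/2^m, (k+1)/2^m]`, `F ∘ g^[m]` is the parabola
`(2^m x - k)(k + 1 - 2^m x)`, and an affine function through two points `p, q` of the graph
of `F` differs from `F` by `(x - p)(x - q)`; hence `I = F - (F ∘ g^[m]) / 4^m`, which gives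
the sum formula, and the error `(F ∘ g^[m]) / 4^m` is at most `4^{-m-1}`, with equality
where `g^[m] x = 1/2`.
-/

/-- `s_ℓ(y) = (1/2)·max(0,y) − max(0, y − 2^{−2ℓ−1})`. -/
noncomputable def sFun (l : ℕ) (y : ℝ) : ℝ :=
  2⁻¹ * max 0 y - max 0 (y - (2 : ℝ) ^ (-(2 * (l : ℤ)) - 1))

/-- `H_0 = s_0`, `H_ℓ = s_ℓ ∘ H_{ℓ−1}`. -/
noncomputable def HFun : ℕ → ℝ → ℝ
  | 0 => sFun 0
  | l + 1 => sFun (l + 1) ∘ HFun l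

open Set

noncomputable def tentMap (x : ℝ) : ℝ := 2 * x - 4 * max 0 (x - 2⁻¹)

namespace tentMap

lemma eq_of_le_half {x : ℝ} (hx : x ≤ 2⁻¹) : tentMap x = 2 * x := by
  rw [tentMap, max_eq_left (by linarith)]; ring

lemma eq_of_half_le {x : ℝ} (hx : 2⁻¹ ≤ x) : tentMap x = 2 - 2 * x := by
  rw [tentMap, max_eq_right (by linarith)]; ring

lemma mapsTo_Icc : MapsTo tentMap (Icc 0 1) (Icc 0 1) := by
  rintro x ⟨h0, h1⟩
  rcases le_total x 2⁻¹ with h | h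
  · rw [eq_of_le_half h]; constructor <;> linarith
  · rw [eq_of_half_le h]; constructor <;> linarith

lemma self_sub_sq_eq (x : ℝ) :
    x - x ^ 2 = tentMap x / 4 + (tentMap x - tentMap x ^ 2) / 4 := by
  rcases le_total x 2⁻¹ with h | h
  · rw [eq_of_le_half h]; ring
  · rw [eq_of_half_le h]; ring

lemma iterate_half_div_two_pow (m : ℕ) : tentMap^[m] (2⁻¹ / 2 ^ m) = 2⁻¹ := by
  induction m with
  | zero => simp
  | succ m ih =>
    have hle : 2⁻¹ / (2 : ℝ) ^ (m + 1) ≤ 2⁻¹ :=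
      div_le_self (by norm_num) (one_le_pow₀ (by norm_num))
    rw [Function.iterate_succ_apply, eq_of_le_half hle]
    convert ih using 2
    rw [pow_succ]; field_simp

lemma iterate_sub_sq_eq (m : ℕ) : ∀ k : ℕ, k < 2 ^ m → ∀ x : ℝ,
    (k : ℝ) ≤ 2 ^ m * x → 2 ^ m * x ≤ k + 1 →
    tentMap^[m] x - (tentMap^[m] x) ^ 2 = (2 ^ m * x - k) * (k + 1 - 2 ^ m * x) := by
  induction m with
  | zero =>
    intro k hk x _ _
    obtain rfl : k = 0 := by omega
    simp only [pow_zero, one_mul, Function.iterate_zero_apply, Nat.cast_zero, sub_zero,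
      zero_add]
    ring
  | succ m ih =>
    intro k hk x h1 h2
    rw [pow_succ 2 m] at hk
    rw [pow_succ (2 : ℝ) m] at h1 h2 ⊢
    rw [Function.iterate_succ_apply]
    -- the tent map sends a cell in the left half onto a cell of level `m` preserving
    -- orientation, and one in the right half reversing it (`k ↦ 2^(m+1) - 1 - k`)
    rcases lt_or_ge k (2 ^ m) with hkm | hkm
    · have hkm' : (k : ℝ) + 1 ≤ 2 ^ m := by exact_mod_cast hkm
      have hx : x ≤ 2⁻¹ := by nlinarith [pow_pos (two_pos : (0 : ℝ) < 2) m]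
      rw [eq_of_le_half hx]
      convert ih k hkm (2 * x) (by linarith) (by linarith) using 2 <;> ring
    · obtain ⟨k', hk'⟩ : ∃ k', k + k' + 1 = 2 ^ m * 2 := ⟨2 ^ m * 2 - 1 - k, by omega⟩
      have hk'R : (k' : ℝ) = 2 ^ m * 2 - 1 - k := by
        have : (k : ℝ) + k' + 1 = 2 ^ m * 2 := by exact_mod_cast hk'
        linarith
      have hkm' : (2 : ℝ) ^ m ≤ k := by exact_mod_cast hkm
      have hx : 2⁻¹ ≤ x := by nlinarith [pow_pos (two_pos : (0 : ℝ) < 2) m]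
      rw [eq_of_half_le hx, ih k' (by omega) (2 - 2 * x) (by linarith) (by linarith), hk'R]
      ring

end tentMap

lemma two_zpow_neg_two_mul_sub_one (l : ℕ) : (2 : ℝ) ^ (-(2 * (l : ℤ)) - 1) = 2⁻¹ / 4 ^ l := by
  rw [show -(2 * (l : ℤ)) - 1 = -((2 * l + 1 : ℕ) : ℤ) by push_cast; ring, zpow_neg,
    zpow_natCast, pow_succ', pow_mul]
  norm_num
  ring

lemma two_zpow_neg_two_mul_sub_two (m : ℕ) :
    (2 : ℝ) ^ (-(2 * (m : ℤ)) - 2) = 4⁻¹ / 4 ^ m := by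
  rw [show -(2 * (m : ℤ)) - 2 = -((2 * m + 2 : ℕ) : ℤ) by push_cast; ring, zpow_neg,
    zpow_natCast, pow_add, pow_mul]
  norm_num; ring

lemma sFun_div_four_pow (l : ℕ) {z : ℝ} (hz : 0 ≤ z) :
    sFun l (z / 4 ^ l) = tentMap z / 4 ^ (l + 1) := by
  have h4 : (0 : ℝ) < 4 ^ l := by positivity
  have hmax : max 0 (z / 4 ^ l - 2⁻¹ / 4 ^ l) = max 0 (z - 2⁻¹) / 4 ^ l := by
    rw [← sub_div, ← max_div_div_right h4.le, zero_div]
  rw [sFun, two_zpow_neg_two_mul_sub_one, max_eq_right (div_nonneg hz h4.le), hmax, tentMap,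
    pow_succ]
  field_simp
  ring

lemma HFun_eq_iterate_tentMap (l : ℕ) {x : ℝ} (hx : x ∈ Icc (0 : ℝ) 1) :
    HFun l x = tentMap^[l + 1] x / 4 ^ (l + 1) := by
  induction l with
  | zero => simpa [HFun] using sFun_div_four_pow 0 hx.1
  | succ l ih =>
    rw [HFun, Function.comp_apply, ih, sFun_div_four_pow _ (tentMap.mapsTo_Icc.iterate _ hx).1,
      Function.iterate_succ_apply' tentMap (l + 1)]

lemma sum_range_HFun (m : ℕ) {x : ℝ} (hx : x ∈ Icc (0 : ℝ) 1) :
    ∑ l ∈ Finset.range m, HFun l x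
      = x - x ^ 2 - (tentMap^[m] x - (tentMap^[m] x) ^ 2) / 4 ^ m := by
  induction m with
  | zero => simp
  | succ m ih =>
    rw [Finset.sum_range_succ, ih, HFun_eq_iterate_tentMap m hx, Function.iterate_succ_apply',
      tentMap.self_sub_sq_eq (tentMap^[m] x), pow_succ]
    field_simp
    ring

lemma affine_eq_self_sub_sq_add {a b p q : ℝ} (hpq : p ≠ q)
    (hp : a * p + b = p - p ^ 2) (hq : a * q + b = q - q ^ 2) (x : ℝ) :
    a * x + b = x - x ^ 2 + (x - p) * (x - q) := by
  have ha : a = 1 - p - q := by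
    apply mul_right_cancel₀ (sub_ne_zero.mpr hpq)
    linear_combination hp - hq
  have hb : b = p * q := by rw [ha] at hp; linear_combination hp
  rw [ha, hb]; ring

lemma exists_dyadic_cell (m : ℕ) {x : ℝ} (hx : x ∈ Icc (0 : ℝ) 1) :
    ∃ k : ℕ, k < 2 ^ m ∧ (k : ℝ) ≤ 2 ^ m * x ∧ 2 ^ m * x ≤ k + 1 := by
  have hy : 0 ≤ (2 : ℝ) ^ m * x := mul_nonneg (by positivity) hx.1
  refine ⟨min ⌊(2 : ℝ) ^ m * x⌋₊ (2 ^ m - 1),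
    (min_le_right _ _).trans_lt (Nat.sub_lt (Nat.two_pow_pos m) one_pos),
    (Nat.cast_le.mpr (min_le_left _ _)).trans (Nat.floor_le hy), ?_⟩
  rcases min_cases ⌊(2 : ℝ) ^ m * x⌋₊ (2 ^ m - 1) with ⟨h, -⟩ | ⟨h, -⟩ <;> rw [h]
  · exact (Nat.lt_floor_add_one _).le
  · rw [Nat.cast_sub Nat.one_le_two_pow]
    push_cast
    nlinarith [hx.2, pow_pos (two_pos : (0 : ℝ) < 2) m]

lemma interpolant_eq_sub_iterate_tentMap (m : ℕ) (I : ℝ → ℝ)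
    (hinterp : ∀ k : ℕ, k ≤ 2 ^ m →
      I ((k : ℝ) / 2 ^ m) = (k : ℝ) / 2 ^ m - ((k : ℝ) / 2 ^ m) ^ 2)
    (haff : ∀ k : ℕ, k < 2 ^ m → ∃ a b : ℝ,
      ∀ x ∈ Icc ((k : ℝ) / 2 ^ m) (((k : ℝ) + 1) / 2 ^ m), I x = a * x + b)
    {x : ℝ} (hx : x ∈ Icc (0 : ℝ) 1) :
    I x = x - x ^ 2 - (tentMap^[m] x - (tentMap^[m] x) ^ 2) / 4 ^ m := by
  obtain ⟨k, hk, h1, h2⟩ := exists_dyadic_cell m hx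
  obtain ⟨a, b, hab⟩ := haff k hk
  have h2m : (0 : ℝ) < 2 ^ m := by positivity
  have hpq : (k : ℝ) / 2 ^ m < ((k : ℝ) + 1) / 2 ^ m := by gcongr; exact lt_add_one _
  have hp := hinterp k hk.le
  rw [hab _ ⟨le_rfl, hpq.le⟩] at hp
  have hq : a * (((k : ℝ) + 1) / 2 ^ m) + b
      = ((k : ℝ) + 1) / 2 ^ m - (((k : ℝ) + 1) / 2 ^ m) ^ 2 := by
    rw [← hab _ ⟨hpq.le, le_rfl⟩]; exact_mod_cast hinterp (k + 1) hk
  rw [hab x ⟨(div_le_iff₀' h2m).2 h1, (le_div_iff₀' h2m).2 h2⟩,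
    affine_eq_self_sub_sq_add hpq.ne hp hq, tentMap.iterate_sub_sq_eq m k hk x h1 h2,
    show (4 : ℝ) ^ m = 2 ^ m * 2 ^ m by rw [← mul_pow]; norm_num]
  field_simp
  ring

lemma isGreatest_image_iterate_tentMap (m : ℕ) :
    IsGreatest ((fun x ↦ (tentMap^[m] x - (tentMap^[m] x) ^ 2) / 4 ^ m) '' Icc 0 1)
      (4⁻¹ / 4 ^ m) := by
  refine ⟨⟨2⁻¹ / 2 ^ m, ⟨by positivity, ?_⟩, ?_⟩, ?_⟩
  · exact (div_le_self (by norm_num) (one_le_pow₀ (by norm_num))).trans (by norm_num)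
  · dsimp only
    rw [tentMap.iterate_half_div_two_pow]; norm_num
  · rintro _ ⟨x, -, rfl⟩
    dsimp only
    gcongr
    nlinarith [sq_nonneg (tentMap^[m] x - 2⁻¹)]

theorem stmt0_general (m : ℕ) (I : ℝ → ℝ)
    (hinterp : ∀ k : ℕ, k ≤ 2 ^ m →
      I ((k : ℝ) / 2 ^ m) = (k : ℝ) / 2 ^ m - ((k : ℝ) / 2 ^ m) ^ 2)
    (haff : ∀ k : ℕ, k < 2 ^ m → ∃ a b : ℝ,
      ∀ x ∈ Set.Icc ((k : ℝ) / 2 ^ m) (((k : ℝ) + 1) / 2 ^ m), I x = a * x + b) :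
    sSup ((fun x : ℝ => |(x - x ^ 2) - I x|) '' Set.Icc (0 : ℝ) 1)
        = (2 : ℝ) ^ (-(2 * (m : ℤ)) - 2) ∧
      ∀ x ∈ Set.Icc (0 : ℝ) 1, I x = ∑ l ∈ Finset.range m, HFun l x := by
  have hI {x : ℝ} (hx : x ∈ Icc (0 : ℝ) 1) := interpolant_eq_sub_iterate_tentMap m I hinterp haff hx
  refine ⟨?_, fun x hx ↦ by rw [hI hx, sum_range_HFun m hx]⟩
  have herr : EqOn (fun x : ℝ ↦ |(x - x ^ 2) - I x|)
      (fun x ↦ (tentMap^[m] x - (tentMap^[m] x) ^ 2) / 4 ^ m) (Icc 0 1) := by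
    intro x hx
    have hy := tentMap.mapsTo_Icc.iterate m hx
    dsimp only
    rw [hI hx, sub_sub_cancel, abs_of_nonneg]
    exact div_nonneg (by nlinarith [hy.1, hy.2]) (by positivity)
  rw [herr.image_eq, (isGreatest_image_iterate_tentMap m).csSup_eq,
    two_zpow_neg_two_mul_sub_two]

/-- Lemma (interpolation of `F(x) = x − x²` at dyadic points): if `I : [0,1] → [0,1]`
agrees with `F` at the points `k/2^m`, `k ∈ {0,…,2^m}`, and is affine on each interval
`[k/2^m, (k+1)/2^m]`, then `sup_{x∈[0,1]} |F(x) − I(x)| = 2^{−2m−2}` and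
`I(x) = ∑_{ℓ=0}^{m−1} H_ℓ(x)` on `[0,1]`. -/
theorem stmt0 (m : ℕ) (hm : 1 ≤ m) (I : ℝ → ℝ)
    (hmap : Set.MapsTo I (Set.Icc (0 : ℝ) 1) (Set.Icc (0 : ℝ) 1))
    (hinterp : ∀ k : ℕ, k ≤ 2 ^ m →
      I ((k : ℝ) / 2 ^ m) = (k : ℝ) / 2 ^ m - ((k : ℝ) / 2 ^ m) ^ 2)
    (haff : ∀ k : ℕ, k < 2 ^ m → ∃ a b : ℝ,
      ∀ x ∈ Set.Icc ((k : ℝ) / 2 ^ m) (((k : ℝ) + 1) / 2 ^ m), I x = a * x + b) :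
    sSup ((fun x : ℝ => |(x - x ^ 2) - I x|) '' Set.Icc (0 : ℝ) 1)
        = (2 : ℝ) ^ (-(2 * (m : ℤ)) - 2) ∧
      ∀ x ∈ Set.Icc (0 : ℝ) 1, I x = ∑ l ∈ Finset.range m, HFun l x :=
  stmt0_general m I hinterp haff
end

section
/- Let l ∈ ℕ and define F_l = f_l ∘ ... ∘ f_1. Then for all x ∈ ℝ: F_l(x)_i = x^{2^{l-1} + i} for all i ∈ {1,...,2^{l-1}}, and F_l(x)_{2^{l-1}+1} = x. -/
/-- The map `f_ℓ : ℝ^{2^{ℓ−2}+1} → ℝ^{2^{ℓ−1}+1}` (for `ℓ ≥ 2`), written with 0-based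
indices: with `x_1, …, x_{2^{ℓ−2}+1}` the (1-based) coordinates of the input,
`f_ℓ(x)_1 = x_{2^{ℓ−2}} x_{2^{ℓ−2}+1}`, `f_ℓ(x)_{2k} = x_k²` for `k ∈ {1,…,2^{ℓ−2}}`,
`f_ℓ(x)_{2k+1} = x_k x_{k+1}` for `k ∈ {1,…,2^{ℓ−2}−1}`, and
`f_ℓ(x)_{2^{ℓ−1}+1} = x_{2^{ℓ−2}+1}`.  (Out-of-range accesses, which do not occur for
`ℓ ≥ 2`, default to `0`.) -/
noncomputable def fPoly (l : ℕ) (x : Fin (2 ^ (l - 2) + 1) → ℝ)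
    (i : Fin (2 ^ (l - 1) + 1)) : ℝ :=
  let x' : ℕ → ℝ := fun j => if h : j < 2 ^ (l - 2) + 1 then x ⟨j, h⟩ else 0
  if (i : ℕ) = 0 then x' (2 ^ (l - 2) - 1) * x' (2 ^ (l - 2))
  else if (i : ℕ) = 2 ^ (l - 1) then x' (2 ^ (l - 2))
  else if (i : ℕ) % 2 = 1 then (x' (((i : ℕ) + 1) / 2 - 1)) ^ 2
  else x' ((i : ℕ) / 2 - 1) * x' ((i : ℕ) / 2)

/-- The map `f_1 : ℝ → ℝ²`, `f_1(x) = (x², x)`. -/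
noncomputable def f1 (x : ℝ) : Fin 2 → ℝ := ![x ^ 2, x]

/-- `F_ℓ = f_ℓ ∘ ⋯ ∘ f_1 : ℝ → ℝ^{2^{ℓ−1}+1}` (for `ℓ ≥ 1`; the value at `ℓ = 0` is
irrelevant junk). -/
noncomputable def FPoly : (l : ℕ) → ℝ → Fin (2 ^ (l - 1) + 1) → ℝ
  | 0 => fun x _ => x
  | 1 => f1
  | l + 2 => fun x => fPoly (l + 2) (FPoly (l + 1) x)

/-!
With `n = 2^(l-1)`, `F_l(x)` is the vector `(x^(n+1), …, x^(2n), x)`. The map `f_(l+1)` sends it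
to `(x^(2n) · x, (x^(n+1))², x^(n+1) x^(n+2), …, (x^(2n))², x)`: the squares double the exponents
and the products of neighbours fill in the odd ones in between, giving `(x^(2n+1), …, x^(4n), x)`.
-/

noncomputable def powSeq (n : ℕ) (x : ℝ) (k : ℕ) : ℝ :=
  if k < n then x ^ (n + k + 1) else x

theorem powSeq_of_lt {n k : ℕ} (x : ℝ) (h : k < n) : powSeq n x k = x ^ (n + k + 1) :=
  if_pos h

theorem powSeq_self (n : ℕ) (x : ℝ) : powSeq n x n = x :=
  if_neg (lt_irrefl n)

theorem f1_eq_powSeq (x : ℝ) : f1 x = fun k : Fin 2 => powSeq 1 x k := by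
  ext k
  fin_cases k <;> simp [f1, powSeq]

theorem fPoly_powSeq (m : ℕ) (x : ℝ) :
    fPoly (m + 2) (fun k : Fin (2 ^ m + 1) => powSeq (2 ^ m) x k) =
      fun j : Fin (2 ^ (m + 1) + 1) => powSeq (2 ^ (m + 1)) x j := by
  ext ⟨j, hj⟩
  change j < 2 ^ (m + 1) + 1 at hj
  have hpos : 0 < 2 ^ m := by positivity
  simp only [fPoly, show m + 2 - 2 = m from rfl, show m + 2 - 1 = m + 1 from rfl]
  rw [pow_succ] at hj ⊢
  generalize 2 ^ m = n at *
  -- the zero padding in `fPoly` is never reached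
  have hpad : ∀ k ≤ n, (if h : k < n + 1 then powSeq n x k else 0) = powSeq n x k :=
    fun k hk => dif_pos (by omega)
  simp (disch := omega) only [hpad]
  split_ifs with h0 hlast hodd
  · rw [powSeq_of_lt x (by omega), powSeq_self, powSeq_of_lt x (by omega), ← pow_succ]
    congr 1
    omega
  · rw [hlast, powSeq_self, powSeq_self]
  · rw [powSeq_of_lt x (by omega), powSeq_of_lt x (by omega), ← pow_mul]
    congr 1
    omega
  · rw [powSeq_of_lt x (by omega), powSeq_of_lt x (by omega), powSeq_of_lt x (by omega),
      ← pow_add]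
    congr 1
    omega

theorem FPoly_succ (m : ℕ) (x : ℝ) :
    FPoly (m + 1) x = fun k : Fin (2 ^ m + 1) => powSeq (2 ^ m) x k := by
  induction m with
  | zero => exact f1_eq_powSeq x
  | succ m ih => exact (congrArg (fPoly (m + 2)) ih).trans (fPoly_powSeq m x)

/-- Lemma: for `ℓ ≥ 1` and all `x ∈ ℝ`, `F_ℓ(x)_i = x^{2^{ℓ−1}+i}` for
`i ∈ {1,…,2^{ℓ−1}}` (here `i.castSucc` is the 0-based version of the 1-based index
`i+1`), and `F_ℓ(x)_{2^{ℓ−1}+1} = x`. -/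
theorem stmt11 (l : ℕ) (hl : 1 ≤ l) (x : ℝ) :
    (∀ i : Fin (2 ^ (l - 1)), FPoly l x i.castSucc = x ^ (2 ^ (l - 1) + (i : ℕ) + 1)) ∧
    FPoly l x (Fin.last (2 ^ (l - 1))) = x := by
  obtain ⟨m, rfl⟩ := Nat.exists_eq_add_of_le' hl
  exact ⟨fun i => (congrFun (FPoly_succ m x) _).trans (powSeq_of_lt x i.isLt),
    (congrFun (FPoly_succ m x) _).trans (powSeq_self _ x)⟩
end

section
/- Let l ∈ ℕ, D >= 1, and define F_l = f_l ∘ ... ∘ f_1. Then for all x ∈ [-D, D]: ‖F_l(x)‖_∞ <= D^{2^l}. -/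
lemma norm_fPoly_le {l : ℕ} {B : ℝ} (hB : 1 ≤ B) {x : Fin (2 ^ (l - 2) + 1) → ℝ}
    (hx : ‖x‖ ≤ B) : ‖fPoly l x‖ ≤ B ^ 2 := by
  have hB_le_sq : B ≤ B ^ 2 := by nlinarith
  have hentry : ∀ j : ℕ, ‖if h : j < 2 ^ (l - 2) + 1 then x ⟨j, h⟩ else 0‖ ≤ B := by
    intro j
    split_ifs
    · exact (norm_le_pi_norm x _).trans hx
    · rw [norm_zero]
      linarith
  have hmul : ∀ a b : ℝ, ‖a‖ ≤ B → ‖b‖ ≤ B → ‖a * b‖ ≤ B ^ 2 := fun a b ha hb => by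
    rw [norm_mul, sq]
    exact mul_le_mul ha hb (norm_nonneg _) (by linarith)
  refine (pi_norm_le_iff_of_nonneg (by positivity)).2 fun i => ?_
  unfold fPoly
  extract_lets entry
  split_ifs
  · exact hmul _ _ (hentry _) (hentry _)
  · exact (hentry _).trans hB_le_sq
  · rw [sq]
    exact hmul _ _ (hentry _) (hentry _)
  · exact hmul _ _ (hentry _) (hentry _)

lemma norm_f1_le {D x : ℝ} (hD : 1 ≤ D) (hx : |x| ≤ D) : ‖f1 x‖ ≤ D ^ 2 := by
  refine (pi_norm_le_iff_of_nonneg (by positivity)).2 fun i => ?_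
  fin_cases i
  · simpa [f1, abs_pow] using pow_le_pow_left₀ (abs_nonneg x) hx 2
  · simpa [f1] using hx.trans (by nlinarith : D ≤ D ^ 2)

theorem norm_FPoly_le {D x : ℝ} (hD : 1 ≤ D) (hx : |x| ≤ D) (l : ℕ) :
    ‖FPoly l x‖ ≤ D ^ 2 ^ l := by
  fun_induction FPoly l with
  | case1 => simpa [FPoly] using hx
  | case2 => exact norm_f1_le hD hx
  | case3 l ih =>
    rw [pow_succ, pow_mul]
    exact norm_fPoly_le (one_le_pow₀ hD) ih

theorem stmt12_general (l : ℕ) (D : ℝ) (hD : 1 ≤ D)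
    (x : ℝ) (hx : x ∈ Set.Icc (-D) D) :
    ‖FPoly l x‖ ≤ D ^ (2 ^ l) :=
  norm_FPoly_le hD (abs_le.2 hx) l

/-- Corollary: for `ℓ ≥ 1`, `D ≥ 1`, and all `x ∈ [−D, D]`, `‖F_ℓ(x)‖∞ ≤ D^{2^ℓ}`. -/
theorem stmt12 (l : ℕ) (hl : 1 ≤ l) (D : ℝ) (hD : 1 ≤ D)
    (x : ℝ) (hx : x ∈ Set.Icc (-D) D) :
    ‖FPoly l x‖ ≤ D ^ (2 ^ l) :=
  stmt12_general l D hD x hx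
end
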